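/- arXiv:math/0604024 — 4 statements merged into one kernel-verified Lean document; each statement's English description precedes it below -/
import Mathlib

section
/- For every real t with |t| < π/2, the series ∑_{n=0}^∞ A(n)·tⁿ/n! converges and its sum equals tan t + sec t (i.e. tan t + 1/cos t); that is, tan + sec is the exponential generating function of the Bernoulli–Euler numbers. -/
/-- The Bernoulli–Euler (zigzag, up-down) numbers: `A 0 = 1`, `A 1 = 1`, and
`2 * A (n+1) = ∑ k in range (n+1), (n.choose k) * A k * A (n-k)`. -/
def A : ℕ → ℕ
  | 0 => 1
  | 1 => 1
  | n + 2 =>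
      (∑ k ∈ (Finset.range (n + 2)).attach,
        Nat.choose (n + 1) k.1 * A k.1 * A (n + 1 - k.1)) / 2
decreasing_by
  · have := Finset.mem_range.mp k.2; omega
  · have := Finset.mem_range.mp k.2; omega

/-- `K n l` : number of connected components of the space of very nice
M-morsifications of the multiboundary singularity `B_n^l`, extended by the
recurrence `K n (l+1) = K (n+2) l − (n+2)·l·K (n+2) (l−1)` for `l ≥ 1`,
with `K n 0 = A (n-1)` for `n ≥ 1`, `K n 0 = 0` for `n ≤ 0`,
and `K n 1 = K (n+2) 0`. -/
def K : ℤ → ℕ → ℤ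
  | n, 0 => if 1 ≤ n then (A (n - 1).toNat : ℤ) else 0
  | n, 1 => K (n + 2) 0
  | n, (l + 2) => K (n + 2) (l + 1) - (n + 2) * (l + 1) * K (n + 2) l

/-! The function `f z = (1 + sin z) / cos z`, which is `tan + sec` on the reals, is holomorphic on
the disc `‖z‖ < π / 2` and solves the Riccati equation `2 f' = 1 + f ^ 2` with `f 0 = 1`.
Differentiating this equation `n` times with the Leibniz rule shows that the Taylor coefficients
`f⁽ⁿ⁾(0)` obey the defining recurrence of `A`, so `f⁽ⁿ⁾(0) = A n`; the Taylor series of a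
holomorphic function converges on every disc where it is holomorphic. -/

open Finset Topology

theorem two_dvd_sum_choose_mul_mul_sub (f : ℕ → ℕ) {m : ℕ} (hm : m ≠ 0) :
    2 ∣ ∑ k ∈ range (m + 1), m.choose k * f k * f (m - k) := by
  rw [← ZMod.natCast_eq_zero_iff, Nat.cast_sum]
  -- Modulo 2 the terms at `k` and `m - k` cancel in pairs; a fixed point `m = 2k` carries the
  -- even factor `(2k).choose k`.
  refine sum_involution (fun k _ => m - k) (fun k hk => ?_) (fun k _ hne hfix => ?_)
    (fun k hk => by simp only [mem_range] at hk ⊢; omega)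
    (fun k hk => by have := mem_range.mp hk; omega)
  · have hk : k ≤ m := Nat.lt_succ_iff.mp (mem_range.mp hk)
    rw [← Nat.cast_add, ZMod.natCast_eq_zero_iff, Nat.choose_symm hk, Nat.sub_sub_self hk]
    exact ⟨m.choose k * f k * f (m - k), by ring⟩
  · refine hne ((ZMod.natCast_eq_zero_iff _ 2).mpr ((Dvd.dvd.mul_right ?_ _).mul_right _))
    obtain rfl : m = 2 * k := by omega
    exact Nat.two_dvd_centralBinom_of_one_le (by omega)

theorem two_mul_A_succ (n : ℕ) :
    2 * A (n + 1) =
      (if n = 0 then 1 else 0) + ∑ k ∈ range (n + 1), n.choose k * A k * A (n - k) := by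
  rcases n with _ | n
  · simp [A]
  · rw [A, sum_attach (range (n + 2)) fun k => (n + 1).choose k * A k * A (n + 1 - k),
      Nat.mul_div_cancel' (two_dvd_sum_choose_mul_mul_sub A n.succ_ne_zero), if_neg n.succ_ne_zero,
      zero_add]

theorem eq_A_of_two_mul_succ {K : Type*} [Field K] [CharZero K] {d : ℕ → K} (h₀ : d 0 = 1)
    (hsucc : ∀ n, 2 * d (n + 1) =
      (if n = 0 then 1 else 0) + ∑ k ∈ range (n + 1), n.choose k * d k * d (n - k))
    (n : ℕ) : d n = A n := by
  induction n using Nat.strong_induction_on with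
  | _ n ih =>
    rcases n with _ | n
    · simp [h₀, A]
    · have hA := congrArg (Nat.cast (R := K)) (two_mul_A_succ n)
      push_cast at hA
      have hsum : ∑ k ∈ range (n + 1), (n.choose k : K) * d k * d (n - k)
          = ∑ k ∈ range (n + 1), (n.choose k : K) * A k * A (n - k) :=
        sum_congr rfl fun k hk => by
          have := mem_range.mp hk
          rw [ih k (by omega), ih (n - k) (by omega)]
      apply mul_left_cancel₀ (two_ne_zero : (2 : K) ≠ 0)
      rw [hsucc, hsum, hA]

section Riccati

variable {𝕜 : Type*} [NontriviallyNormedField 𝕜] {f : 𝕜 → 𝕜} {x : 𝕜}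

theorem two_mul_iteratedDeriv_succ_of_two_mul_deriv {n : ℕ} (hf : ContDiffAt 𝕜 n f x)
    (hderiv : ∀ᶠ z in 𝓝 x, 2 * deriv f z = 1 + f z ^ 2) :
    2 * iteratedDeriv (n + 1) f x = (if n = 0 then 1 else 0) +
      ∑ k ∈ range (n + 1), n.choose k * iteratedDeriv k f x * iteratedDeriv (n - k) f x := by
  have hderiv' : (fun z => 2 * deriv f z) =ᶠ[𝓝 x] fun z => 1 + f z * f z := by
    filter_upwards [hderiv] with z hz
    rw [hz, sq]
  rw [iteratedDeriv_succ', ← iteratedDeriv_const_mul_field, hderiv'.iteratedDeriv_eq,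
    iteratedDeriv_fun_add contDiffAt_const (hf.mul hf), iteratedDeriv_const,
    iteratedDeriv_fun_mul hf hf]

end Riccati

noncomputable def tanAddSec (z : ℂ) : ℂ := (1 + Complex.sin z) / Complex.cos z

theorem Complex.cos_ne_zero_of_norm_lt {z : ℂ} (hz : ‖z‖ < Real.pi / 2) : Complex.cos z ≠ 0 := by
  have hre := abs_le.mp (Complex.abs_re_le_norm z)
  refine Complex.cos_ne_zero_of_arctan_bounds (fun h => ?_) (by linarith) (by linarith)
  rw [h, Complex.norm_div, Complex.norm_real, Complex.norm_ofNat,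
    Real.norm_of_nonneg Real.pi_pos.le] at hz
  exact lt_irrefl _ hz

theorem hasDerivAt_tanAddSec {z : ℂ} (hz : Complex.cos z ≠ 0) :
    HasDerivAt tanAddSec ((1 + tanAddSec z ^ 2) / 2) z := by
  have hquot := ((Complex.hasDerivAt_sin z).const_add 1).div (Complex.hasDerivAt_cos z) hz
  refine hquot.congr_deriv ?_
  simp only [tanAddSec]
  field_simp
  linear_combination Complex.sin_sq_add_cos_sq z

theorem iteratedDeriv_tanAddSec_zero (n : ℕ) : iteratedDeriv n tanAddSec 0 = A n := by
  have hcos : ∀ᶠ z in 𝓝 (0 : ℂ), Complex.cos z ≠ 0 :=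
    Complex.continuous_cos.continuousAt.eventually_ne (by simp)
  refine eq_A_of_two_mul_succ (d := fun n => iteratedDeriv n tanAddSec 0) (by simp [tanAddSec])
    (fun n => ?_) n
  refine two_mul_iteratedDeriv_succ_of_two_mul_deriv ?_ ?_
  · exact (contDiffAt_const.add Complex.contDiff_sin.contDiffAt).div
      Complex.contDiff_cos.contDiffAt (by simp)
  · filter_upwards [hcos] with z hz
    rw [(hasDerivAt_tanAddSec hz).deriv]
    ring

theorem tanAddSec_ofReal (x : ℝ) : tanAddSec x = ↑(Real.tan x + 1 / Real.cos x) := by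
  rw [tanAddSec, Real.tan_eq_sin_div_cos, ← add_div, add_comm (Real.sin x)]
  push_cast
  rfl

open Real in
/-- `tan t + sec t` is the exponential generating function of the
Bernoulli–Euler numbers: for `|t| < π/2`,
`∑ A n · tⁿ/n! = tan t + sec t`. -/
theorem egf_bernoulliEuler_eq_tan_add_sec (t : ℝ) (ht : |t| < π / 2) :
    HasSum (fun n : ℕ => (A n : ℝ) * t ^ n / n.factorial)
      (Real.tan t + 1 / Real.cos t) := by
  have hdiff : DifferentiableOn ℂ tanAddSec (Metric.ball 0 (π / 2)) := fun z hz =>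
    (hasDerivAt_tanAddSec (Complex.cos_ne_zero_of_norm_lt (mem_ball_zero_iff.mp hz)))
      |>.differentiableAt.differentiableWithinAt
  have ht' : (t : ℂ) ∈ Metric.ball 0 (π / 2) := by simpa using ht
  have htaylor := Complex.hasSum_taylorSeries_on_ball hdiff ht'
  simp only [sub_zero, iteratedDeriv_tanAddSec_zero, tanAddSec_ofReal, smul_eq_mul] at htaylor
  refine Complex.hasSum_ofReal.mp (htaylor.congr_fun fun n => ?_)
  push_cast
  ring
end

section
/- For every real t with |t| < π/2, the series ∑_{n=0}^∞ K n 1 · tⁿ/n! = ∑_{n=0}^∞ A(n+1)·tⁿ/n! converges and its sum equals 1/(1 − sin t); that is, the exponential generating function for the boundary singularities B_n^1 is K_1(t) = 1/(1 − sin t). -/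
/-!
The function `F z = (1 + sin z) / cos z = sec z + tan z` satisfies `F' = 1 / (1 - sin z)` and
`F² = 2 F' - 1`. Taking the `(m+1)`-st derivative of `F²` at `0` with the Leibniz rule shows that
the Taylor coefficients `F⁽ⁿ⁾(0)` obey the defining recurrence of the zigzag numbers, so
`F⁽ⁿ⁾(0) = A n` (André's theorem). Since `cos` has no zero in the disc `|z| < π/2`,
`1 / (1 - sin z) = F'` is holomorphic there and equals its Taylor series `∑ A (n+1) zⁿ / n!`.
-/

open Finset

theorem sum_range_choose_mul_mul_sub_eq_two_mul {R : Type*} [CommSemiring R] (a : ℕ → R) (m : ℕ) :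
    ∑ k ∈ range (m + 2), ((m + 1).choose k : R) * a k * a (m + 1 - k) =
      2 * ∑ k ∈ range (m + 1), (m.choose k : R) * a (k + 1) * a (m - k) := by
  have reflect : ∑ k ∈ range (m + 1), (m.choose k : R) * a k * a (m + 1 - k) =
      ∑ k ∈ range (m + 1), (m.choose k : R) * a (k + 1) * a (m - k) := by
    rw [← sum_range_reflect]
    refine sum_congr rfl fun k hk => ?_
    have hk : k ≤ m := Nat.lt_succ_iff.mp (mem_range.mp hk)
    rw [show m + 1 - 1 - k = m - k by omega, Nat.choose_symm hk,
      show m + 1 - (m - k) = k + 1 by omega]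
    ring
  have shift : ∑ k ∈ range (m + 1), (m.choose (k + 1) : R) * a (k + 1) * a (m - k) +
      a 0 * a (m + 1) = ∑ k ∈ range (m + 1), (m.choose k : R) * a k * a (m + 1 - k) := by
    rw [sum_range_succ, sum_range_succ']
    simp
  rw [sum_range_succ', two_mul]
  simp only [Nat.choose_succ_succ, Nat.cast_add, add_mul, sum_add_distrib, Nat.add_sub_add_right,
    Nat.choose_zero_right, Nat.cast_one, one_mul, Nat.sub_zero]
  rw [add_assoc, shift, reflect]

-- By the identity above, the division by `2` in the definition of `A` is exact.
theorem A_add_two (m : ℕ) :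
    A (m + 2) = ∑ k ∈ range (m + 1), m.choose k * A (k + 1) * A (m - k) := by
  rw [A, sum_attach (range (m + 2)) fun k => (m + 1).choose k * A k * A (m + 1 - k)]
  have := sum_range_choose_mul_mul_sub_eq_two_mul A m
  simp only [Nat.cast_id] at this
  rw [this, Nat.mul_div_cancel_left _ two_pos]

theorem natCast_A_eq_of_recurrence {R : Type*} [CommSemiring R] {a : ℕ → R} (h0 : a 0 = 1)
    (h1 : a 1 = 1)
    (hrec : ∀ m, a (m + 2) = ∑ k ∈ range (m + 1), (m.choose k : R) * a (k + 1) * a (m - k))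
    (n : ℕ) : (A n : R) = a n := by
  induction n using Nat.strong_induction_on with
  | _ n ih =>
    match n, ih with
    | 0, _ => simp [A, h0]
    | 1, _ => simp [A, h1]
    | m + 2, ih =>
      rw [A_add_two, hrec]
      push_cast
      exact sum_congr rfl fun k hk => by
        have := mem_range.mp hk
        rw [ih (k + 1) (by omega), ih (m - k) (by omega)]

namespace Complex

theorem cos_ne_zero_of_norm_lt_pi_div_two {z : ℂ} (hz : ‖z‖ < Real.pi / 2) : cos z ≠ 0 := by
  intro hcos
  obtain ⟨k, rfl⟩ := cos_eq_zero_iff.mp hcos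
  have hodd : (1 : ℝ) ≤ |2 * (k : ℝ) + 1| := by
    exact_mod_cast Int.one_le_abs (show 2 * k + 1 ≠ 0 by omega)
  have : ‖(2 * (k : ℂ) + 1) * Real.pi / 2‖ = |2 * (k : ℝ) + 1| * (Real.pi / 2) := by
    rw [show (2 * (k : ℂ) + 1) * Real.pi / 2 = ((2 * (k : ℝ) + 1) * (Real.pi / 2) : ℝ) by
        push_cast; ring,
      norm_real, norm_mul, Real.norm_of_nonneg Real.pi_div_two_pos.le, Real.norm_eq_abs]
  nlinarith [Real.pi_div_two_pos]

theorem one_sub_sin_ne_zero_of_cos_ne_zero {z : ℂ} (hz : cos z ≠ 0) : 1 - sin z ≠ 0 := by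
  intro h
  apply hz
  simpa [show sin z = 1 by linear_combination -h] using sin_sq_add_cos_sq z

theorem eventually_cos_ne_zero_nhds_zero : ∀ᶠ z in nhds (0 : ℂ), cos z ≠ 0 :=
  continuous_cos.continuousAt.eventually_ne (by simp)

end Complex

open Complex in
noncomputable def secAddTan (z : ℂ) : ℂ := (1 + sin z) / cos z

namespace secAddTan
open Complex Filter

theorem hasDerivAt {z : ℂ} (hz : cos z ≠ 0) : HasDerivAt secAddTan (1 - sin z)⁻¹ z := by
  have hs := one_sub_sin_ne_zero_of_cos_ne_zero hz
  refine (((hasDerivAt_sin z).const_add 1).fun_div (hasDerivAt_cos z) hz).congr_deriv ?_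
  field_simp
  linear_combination -sin z * sin_sq_add_cos_sq z

theorem mul_self {z : ℂ} (hz : cos z ≠ 0) :
    secAddTan z * secAddTan z = -1 + 2 * (1 - sin z)⁻¹ := by
  have hs := one_sub_sin_ne_zero_of_cos_ne_zero hz
  simp only [secAddTan]
  field_simp
  linear_combination (-1 - sin z) * sin_sq_add_cos_sq z

theorem analyticAt_zero : AnalyticAt ℂ secAddTan 0 := by
  refine DifferentiableOn.analyticAt (s := {z | cos z ≠ 0}) (fun z hz => ?_)
    eventually_cos_ne_zero_nhds_zero
  exact (hasDerivAt hz).differentiableAt.differentiableWithinAt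

theorem iteratedDeriv_succ_zero (n : ℕ) :
    iteratedDeriv (n + 1) secAddTan 0 = iteratedDeriv n (fun z => (1 - sin z)⁻¹) 0 := by
  rw [iteratedDeriv_succ']
  refine EventuallyEq.iteratedDeriv_eq n ?_
  filter_upwards [eventually_cos_ne_zero_nhds_zero] with z hz using (hasDerivAt hz).deriv

theorem iteratedDeriv_add_two_zero (m : ℕ) :
    iteratedDeriv (m + 2) secAddTan 0 = ∑ k ∈ range (m + 1),
      (m.choose k : ℂ) * iteratedDeriv (k + 1) secAddTan 0 * iteratedDeriv (m - k) secAddTan 0 := by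
  have hsq : iteratedDeriv (m + 1) (fun z => secAddTan z * secAddTan z) 0 =
      iteratedDeriv (m + 1) (fun z => -1 + 2 * (1 - sin z)⁻¹) 0 := by
    refine EventuallyEq.iteratedDeriv_eq _ ?_
    filter_upwards [eventually_cos_ne_zero_nhds_zero] with z hz using mul_self hz
  rw [iteratedDeriv_fun_mul analyticAt_zero.contDiffAt analyticAt_zero.contDiffAt,
    iteratedDeriv_const_add m.succ_pos, iteratedDeriv_const_mul_field,
    sum_range_choose_mul_mul_sub_eq_two_mul, ← iteratedDeriv_succ_zero] at hsq
  exact (mul_left_cancel₀ two_ne_zero hsq).symm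

theorem iteratedDeriv_zero_eq_A (n : ℕ) : iteratedDeriv n secAddTan 0 = A n :=
  (natCast_A_eq_of_recurrence (a := fun n => iteratedDeriv n secAddTan 0) (by simp [secAddTan])
    (by simp [iteratedDeriv_succ_zero 0]) iteratedDeriv_add_two_zero n).symm

end secAddTan

theorem K_one (n : ℕ) : K n 1 = A (n + 1) := by
  rw [K, K, if_pos (by omega), show ((n : ℤ) + 2 - 1).toNat = n + 1 by omega]

open Real in
/-- The exponential generating function for the boundary singularities `B_n^1`:
for `|t| < π/2`, `∑ K n 1 · tⁿ/n! = ∑ A(n+1)·tⁿ/n! = 1/(1 − sin t)`. -/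
theorem egf_K_one (t : ℝ) (ht : |t| < π / 2) :
    (∀ n : ℕ, K n 1 = (A (n + 1) : ℤ)) ∧
    HasSum (fun n : ℕ => (K n 1 : ℝ) * t ^ n / n.factorial)
      (1 / (1 - Real.sin t)) := by
  refine ⟨K_one, ?_⟩
  have hG : DifferentiableOn ℂ (fun z => (1 - Complex.sin z)⁻¹) (Metric.ball 0 (π / 2)) := by
    refine DifferentiableOn.inv (by fun_prop) fun z hz => ?_
    exact Complex.one_sub_sin_ne_zero_of_cos_ne_zero
      (Complex.cos_ne_zero_of_norm_lt_pi_div_two (by simpa using hz))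
  have hsum := Complex.hasSum_taylorSeries_on_ball hG (z := t) (by simpa using ht)
  have hterm (n : ℕ) : (n.factorial : ℂ)⁻¹ • ((t : ℂ) - 0) ^ n •
      iteratedDeriv n (fun z => (1 - Complex.sin z)⁻¹) 0 =
      ((K n 1 * t ^ n / n.factorial : ℝ) : ℂ) := by
    rw [← secAddTan.iteratedDeriv_succ_zero, secAddTan.iteratedDeriv_zero_eq_A, K_one]
    push_cast
    simp only [smul_eq_mul, sub_zero]
    ring
  have hval : (1 - Complex.sin t)⁻¹ = ((1 / (1 - Real.sin t) : ℝ) : ℂ) := by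
    push_cast
    rw [one_div]
  simp only [hterm, hval] at hsum
  exact Complex.hasSum_ofReal.mp hsum
end

section
/- For every real t with |t| < π/2, the series ∑_{n=0}^∞ K n 2 · tⁿ/n! converges and its sum equals (3·sin t − t·cos t)/(1 − sin t)²; that is, the exponential generating function for the multiboundary singularities B_n^2 is K_2(t) = (3 sin t − t cos t)/(1 − sin t)². -/
/-!
The function `f z = cos z / (1 - sin z) = sec z + tan z` satisfies `2 f' = 1 + f²` and `f 0 = 1`,
so by the Leibniz rule its Taylor coefficients at `0` obey the convolution recurrence of `A`,
i.e. `f⁽ⁿ⁾(0) = A n`. Unfolding `K` gives `K n 2 = A (n+3) - (n+2) A (n+1)`, whose exponential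
generating function is therefore `f''' - z f'' - 2 f'`. This is holomorphic wherever
`sin z ≠ 1`, in particular on the disc `‖z‖ < π/2`, so its Taylor series at `0` converges
to it there, and the closed forms `f' = 1/(1 - sin)`, `f'' = cos/(1 - sin)²` and
`f''' = (2 + sin)/(1 - sin)²` evaluate it to `(3 sin t - t cos t)/(1 - sin t)²`.
-/

open Complex Metric Finset Set Filter Topology
open scoped Real

section IteratedDeriv

variable {𝕜 F : Type*} [NontriviallyNormedField 𝕜] [NormedAddCommGroup F] [NormedSpace 𝕜 F]

lemma iteratedDeriv_iteratedDeriv (m n : ℕ) (f : 𝕜 → F) :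
    iteratedDeriv n (iteratedDeriv m f) = iteratedDeriv (n + m) f := by
  simp only [iteratedDeriv_eq_iterate, Function.iterate_add_apply]

lemma Set.EqOn.iteratedDeriv_succ_of_hasDerivAt {n : ℕ} {f g g' : 𝕜 → F} {U : Set 𝕜}
    (hU : IsOpen U) (h : EqOn (iteratedDeriv n f) g U) (hg : ∀ z ∈ U, HasDerivAt g (g' z) z) :
    EqOn (iteratedDeriv (n + 1) f) g' U := fun z hz => by
  rw [iteratedDeriv_succ, (h.eventuallyEq_of_mem (hU.mem_nhds hz)).deriv_eq, (hg z hz).deriv]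

lemma iteratedDeriv_fun_id_mul_zero {n : ℕ} {f : 𝕜 → 𝕜} (hf : ContDiffAt 𝕜 n f 0) :
    iteratedDeriv n (fun z => z * f z) 0 = n * iteratedDeriv (n - 1) f 0 := by
  rw [iteratedDeriv_fun_mul contDiffAt_fun_id hf]
  simp +contextual [iteratedDeriv_fun_id_zero]

end IteratedDeriv

lemma two_dvd_sum_choose_mul_mul (a : ℕ → ℕ) {n : ℕ} (hn : n ≠ 0) :
    2 ∣ ∑ k ∈ range (n + 1), n.choose k * a k * a (n - k) := by
  -- `k ↦ n - k` pairs off equal terms; its fixed point `k = n/2` carries `centralBinom (n/2)`.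
  rw [← ZMod.natCast_eq_zero_iff]
  push_cast
  refine Finset.sum_involution (fun k _ => n - k) (fun k hk => ?_) (fun k hk hne heq => ?_)
    (fun k hk => ?_) (fun k hk => ?_)
  · have hkn : k ≤ n := Nat.lt_succ_iff.mp (mem_range.mp hk)
    rw [Nat.sub_sub_self hkn, Nat.choose_symm hkn, mul_right_comm, CharTwo.add_self_eq_zero]
  · obtain rfl : n = k + k := by omega
    apply hne
    rw [← two_mul, ← Nat.centralBinom_eq_two_mul_choose,
      (ZMod.natCast_eq_zero_iff _ 2).mpr (Nat.two_dvd_centralBinom_of_one_le (by omega)),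
      zero_mul, zero_mul]
  · exact mem_range.mpr (by omega)
  · have := mem_range.mp hk; omega

lemma two_mul_A_add_two (n : ℕ) :
    2 * A (n + 2) = ∑ k ∈ range (n + 2), (n + 1).choose k * A k * A (n + 1 - k) := by
  rw [A, Finset.sum_attach (range (n + 2)) fun k => (n + 1).choose k * A k * A (n + 1 - k)]
  exact Nat.mul_div_cancel' (two_dvd_sum_choose_mul_mul A n.succ_ne_zero)

lemma K_natCast_two (n : ℕ) : K n 2 = A (n + 3) - (n + 2) * A (n + 1) := by
  simp only [K]
  rw [if_pos (by omega), if_pos (by omega), show ((n : ℤ) + 2 + 2 - 1).toNat = n + 3 by omega,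
    show ((n : ℤ) + 2 - 1).toNat = n + 1 by omega]
  ring

lemma Complex.sin_ne_one_of_norm_lt {z : ℂ} (hz : ‖z‖ < π / 2) : sin z ≠ 1 := by
  intro h
  obtain ⟨k, rfl⟩ := Complex.sin_eq_one_iff.mp h
  rw [show (π / 2 + k * (2 * π) : ℂ) = ((π / 2 + k * (2 * π) : ℝ) : ℂ) by push_cast; rfl,
    Complex.norm_real, Real.norm_eq_abs] at hz
  obtain ⟨hlo, hhi⟩ := abs_lt.mp hz
  rcases le_or_gt 0 k with hk | hk
  · have : (0 : ℝ) ≤ k := by exact_mod_cast hk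
    nlinarith [Real.pi_pos]
  · have : (k : ℝ) ≤ -1 := by exact_mod_cast (by omega : k ≤ -1)
    nlinarith [Real.pi_pos]

lemma isOpen_setOf_sin_ne_one : IsOpen {z : ℂ | sin z ≠ 1} :=
  isOpen_ne_fun continuous_sin continuous_const

-- Written as `cos / (1 - sin)` rather than `sec + tan` so that all its derivatives are
-- fractions over powers of `1 - sin z`.
noncomputable def zigzagEGF (z : ℂ) : ℂ := cos z / (1 - sin z)

section zigzagEGF

variable {z : ℂ}

lemma hasDerivAt_zigzagEGF (hz : sin z ≠ 1) : HasDerivAt zigzagEGF (1 - sin z)⁻¹ z := by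
  have hs : 1 - sin z ≠ 0 := sub_ne_zero.mpr (Ne.symm hz)
  refine ((hasDerivAt_cos z).div ((hasDerivAt_sin z).const_sub 1) hs).congr_deriv ?_
  field_simp
  linear_combination sin_sq_add_cos_sq z

lemma two_mul_deriv_zigzagEGF (hz : sin z ≠ 1) :
    2 * deriv zigzagEGF z = 1 + zigzagEGF z * zigzagEGF z := by
  have hs : 1 - sin z ≠ 0 := sub_ne_zero.mpr (Ne.symm hz)
  rw [(hasDerivAt_zigzagEGF hz).deriv, zigzagEGF]
  field_simp
  linear_combination (-1) * sin_sq_add_cos_sq z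

lemma analyticOnNhd_zigzagEGF : AnalyticOnNhd ℂ zigzagEGF {z | sin z ≠ 1} :=
  DifferentiableOn.analyticOnNhd
    (fun _ hz => (hasDerivAt_zigzagEGF hz).differentiableAt.differentiableWithinAt)
    isOpen_setOf_sin_ne_one

lemma analyticAt_iteratedDeriv_zigzagEGF (n : ℕ) (hz : sin z ≠ 1) :
    AnalyticAt ℂ (iteratedDeriv n zigzagEGF) z := by
  rw [iteratedDeriv_eq_iterate]
  exact analyticOnNhd_zigzagEGF.iterated_deriv n z hz

lemma iteratedDeriv_zigzagEGF_zero (n : ℕ) : iteratedDeriv n zigzagEGF 0 = A n := by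
  induction n using Nat.strong_induction_on with
  | _ n ih =>
  have h0 : sin (0 : ℂ) ≠ 1 := by simp
  rcases n with _ | _ | n
  · simp [zigzagEGF, A]
  · have h := two_mul_deriv_zigzagEGF h0
    simp only [zigzagEGF, sin_zero, cos_zero] at h
    rw [iteratedDeriv_one, show A 1 = 1 by rw [A]]
    linear_combination h / 2
  · have hf : ContDiffAt ℂ (n + 1) zigzagEGF 0 := (analyticOnNhd_zigzagEGF 0 h0).contDiffAt
    have hode : (fun z => 2 * deriv zigzagEGF z) =ᶠ[𝓝 0]
        fun z => 1 + zigzagEGF z * zigzagEGF z :=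
      eventually_of_mem (isOpen_setOf_sin_ne_one.mem_nhds h0)
        fun _ hz => two_mul_deriv_zigzagEGF hz
    have h := hode.iteratedDeriv_eq (n + 1)
    rw [iteratedDeriv_const_mul_field, ← iteratedDeriv_succ',
      iteratedDeriv_const_add (by omega : 0 < n + 1),
      iteratedDeriv_fun_mul hf hf] at h
    have hA := congrArg (Nat.cast : ℕ → ℂ) (two_mul_A_add_two n)
    push_cast at hA
    rw [sum_congr rfl fun k hk => by
      rw [ih k (by have := mem_range.mp hk; omega), ih (n + 1 - k) (by omega)]] at h
    linear_combination (h - hA) / 2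

lemma eqOn_iteratedDeriv_one_zigzagEGF :
    EqOn (iteratedDeriv 1 zigzagEGF) (fun z => (1 - sin z)⁻¹) {z | sin z ≠ 1} := by
  refine Set.EqOn.iteratedDeriv_succ_of_hasDerivAt isOpen_setOf_sin_ne_one ?_
    fun _ hz => hasDerivAt_zigzagEGF hz
  rw [iteratedDeriv_zero]
  exact eqOn_refl _ _

lemma eqOn_iteratedDeriv_two_zigzagEGF :
    EqOn (iteratedDeriv 2 zigzagEGF) (fun z => cos z / (1 - sin z) ^ 2) {z | sin z ≠ 1} := by
  refine eqOn_iteratedDeriv_one_zigzagEGF.iteratedDeriv_succ_of_hasDerivAt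
    isOpen_setOf_sin_ne_one fun z hz => ?_
  have hs : 1 - sin z ≠ 0 := sub_ne_zero.mpr (Ne.symm hz)
  refine (((hasDerivAt_sin z).const_sub 1).inv hs).congr_deriv ?_
  ring

lemma eqOn_iteratedDeriv_three_zigzagEGF :
    EqOn (iteratedDeriv 3 zigzagEGF) (fun z => (2 + sin z) / (1 - sin z) ^ 2)
      {z | sin z ≠ 1} := by
  refine eqOn_iteratedDeriv_two_zigzagEGF.iteratedDeriv_succ_of_hasDerivAt
    isOpen_setOf_sin_ne_one fun z hz => ?_
  have hs : 1 - sin z ≠ 0 := sub_ne_zero.mpr (Ne.symm hz)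
  refine ((hasDerivAt_cos z).div (((hasDerivAt_sin z).const_sub 1).pow 2)
    (pow_ne_zero 2 hs)).congr_deriv ?_
  simp only [Pi.pow_apply]
  field_simp
  linear_combination (2 - 2 * sin z) * sin_sq_add_cos_sq z

end zigzagEGF

noncomputable def kTwoEGF (z : ℂ) : ℂ :=
  iteratedDeriv 3 zigzagEGF z - z * iteratedDeriv 2 zigzagEGF z - 2 * iteratedDeriv 1 zigzagEGF z

lemma iteratedDeriv_kTwoEGF_zero (n : ℕ) : iteratedDeriv n kTwoEGF 0 = K n 2 := by
  have hd (k : ℕ) : ContDiffAt ℂ n (iteratedDeriv k zigzagEGF) 0 :=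
    (analyticAt_iteratedDeriv_zigzagEGF k (by simp)).contDiffAt
  unfold kTwoEGF
  rw [iteratedDeriv_fun_sub ((hd 3).sub (contDiffAt_fun_id.mul (hd 2)))
    (contDiffAt_const.mul (hd 1)), iteratedDeriv_fun_sub (hd 3) (contDiffAt_fun_id.mul (hd 2)),
    iteratedDeriv_const_mul_field, iteratedDeriv_fun_id_mul_zero (hd 2)]
  simp only [iteratedDeriv_iteratedDeriv, iteratedDeriv_zigzagEGF_zero, K_natCast_two]
  rcases n with _ | n <;> push_cast <;> ring_nf

lemma differentiableOn_kTwoEGF : DifferentiableOn ℂ kTwoEGF {z | sin z ≠ 1} := fun z hz => by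
  have hd (k : ℕ) := (analyticAt_iteratedDeriv_zigzagEGF k hz).differentiableAt
  exact (((hd 3).sub (differentiableAt_id.mul (hd 2))).sub
    ((hd 1).const_mul 2)).differentiableWithinAt

lemma kTwoEGF_eq {z : ℂ} (hz : sin z ≠ 1) :
    kTwoEGF z = (3 * sin z - z * cos z) / (1 - sin z) ^ 2 := by
  have hs : 1 - sin z ≠ 0 := sub_ne_zero.mpr (Ne.symm hz)
  rw [kTwoEGF, eqOn_iteratedDeriv_three_zigzagEGF hz, eqOn_iteratedDeriv_two_zigzagEGF hz,
    eqOn_iteratedDeriv_one_zigzagEGF hz]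
  beta_reduce
  field_simp
  ring

open Real in
/-- The exponential generating function for the multiboundary singularities `B_n^2`:
for `|t| < π/2`, `∑ K n 2 · tⁿ/n! = (3 sin t − t cos t)/(1 − sin t)²`. -/
theorem egf_K_two (t : ℝ) (ht : |t| < π / 2) :
    HasSum (fun n : ℕ => (K n 2 : ℝ) * t ^ n / n.factorial)
      ((3 * Real.sin t - t * Real.cos t) / (1 - Real.sin t) ^ 2) := by
  have hball : ball (0 : ℂ) (π / 2) ⊆ {z | Complex.sin z ≠ 1} := fun z hz =>
    Complex.sin_ne_one_of_norm_lt (mem_ball_zero_iff.mp hz)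
  have htC : (t : ℂ) ∈ ball (0 : ℂ) (π / 2) := by simpa using ht
  have H := Complex.hasSum_taylorSeries_on_ball (differentiableOn_kTwoEGF.mono hball) htC
  rw [kTwoEGF_eq (hball htC)] at H
  have hterm (n : ℕ) : (n.factorial : ℂ)⁻¹ • ((t : ℂ) - 0) ^ n • iteratedDeriv n kTwoEGF 0 =
      K n 2 * t ^ n / n.factorial := by
    rw [iteratedDeriv_kTwoEGF_zero, sub_zero, smul_eq_mul, smul_eq_mul]
    ring
  rw [← Complex.hasSum_ofReal]
  push_cast
  simpa only [hterm] using H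
end

section
/- For each l ∈ ℕ, let F_l ∈ ℚ⟦y⟧ be the formal power series whose coefficient of yⁿ is K n l / n!. Then for every l ≥ 1, F_{l+1} = F_l'' − 2l·F_{l−1}'' − l·y·F_{l−1}''', where ' denotes the formal derivative of power series. (This is the coefficient form of the PDE K_x = (1 − 2x)·K_{yy} − x·y·K_{yyy} satisfied by the two-variable exponential generating function K(x,y) = ∑_{l,n} K n l · x^l y^n/(l! n!).) -/
open PowerSeries in
/-- The exponential generating series `F l = ∑_n (K n l / n!) yⁿ ∈ ℚ⟦y⟧`. -/
noncomputable def F (l : ℕ) : PowerSeries ℚ :=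
  PowerSeries.mk fun n => (K n l : ℚ) / n.factorial

open PowerSeries in
/-- Coefficient form of the PDE `K_x = (1 − 2x)·K_{yy} − x·y·K_{yyy}` satisfied by the
two-variable exponential generating function `K(x,y)`: for `l ≥ 1`,
`F_{l+1} = F_l'' − 2l·F_{l−1}'' − l·y·F_{l−1}'''`. -/
theorem egf_pde (l : ℕ) (hl : 1 ≤ l) :
    F (l + 1) =
      d⁄dX ℚ (d⁄dX ℚ (F l)) - (2 * l : ℚ) • d⁄dX ℚ (d⁄dX ℚ (F (l - 1))) -
        (l : ℚ) • (PowerSeries.X * d⁄dX ℚ (d⁄dX ℚ (d⁄dX ℚ (F (l - 1))))) := by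
  obtain ⟨m, rfl⟩ := Nat.exists_eq_add_of_le hl
  simp only [Nat.add_sub_cancel_left] at *
  ext n
  have hK : K n (1 + m + 1) = K (n + 2) (m + 1) - (n + 2) * (m + 1) * K (n + 2) m := by
    rw [show 1 + m + 1 = m + 2 from by omega, K]
  simp only [F, map_sub, coeff_mk, coeff_derivative, map_smul, smul_eq_mul]
  rw [hK]
  rcases n with _ | n
  · simp [Nat.factorial]
    ring
  · rw [PowerSeries.coeff_succ_X_mul]
    simp only [coeff_derivative, coeff_mk]
    have h1 : ((n+1+1+1 : ℕ).factorial : ℚ) = (n+1).factorial * (n+2) * (n+3) := by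
      push_cast [Nat.factorial_succ]; ring
    have h2 : ((n+1+1 : ℕ).factorial : ℚ) = n.factorial * (n+1) * (n+2) := by
      push_cast [Nat.factorial_succ]; ring
    have h3 : ((n+1 : ℕ).factorial : ℚ) = n.factorial * (n+1) := by
      push_cast [Nat.factorial_succ]; ring
    have hf : ((n:ℕ).factorial : ℚ) ≠ 0 := Nat.cast_ne_zero.mpr n.factorial_ne_zero
    push_cast [h1, h2, h3]
    field_simp
    ring
end
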